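/- arXiv:1804.05621 — 6 statements merged into one kernel-verified Lean document; each statement's English description precedes it below -/
import Mathlib

section
/- Let E ⊕ K be a direct sum of Hilbert spaces and U = [[A, B], [C, D]] a unitary operator on E ⊕ K (block decomposition). For any operator E(z) on K with ‖E(z)‖ < 1, define τ(z) = A + B E(z) (I − D E(z))⁻¹ C. Then I − τ(z)* τ(z) = C* (I − E(z)* D*)⁻¹ (I − E(z)* E(z)) (I − D E(z))⁻¹ C. -/
open ContinuousLinearMap

/-!
Put `W = (1 - D Ez)⁻¹ C`. Since `C + D Ez W = W`, the block operator `U` sends `(x, Ez W x)` to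
`(τ x, W x)`, so `U* U = 1` gives `τ* τ + W* W = 1 + (Ez W)* (Ez W)`, which rearranges to the
identity because `W* = C* (1 - Ez* D*)⁻¹`. The same relation `U* U = 1` forces `‖D‖ ≤ 1`, so
`1 - D Ez` is indeed invertible.
-/

section Colligation

variable {E K F : Type*} [NormedAddCommGroup E] [InnerProductSpace ℂ E] [CompleteSpace E]
  [NormedAddCommGroup K] [InnerProductSpace ℂ K] [CompleteSpace K]
  [NormedAddCommGroup F] [InnerProductSpace ℂ F] [CompleteSpace F]

theorem norm_le_one_of_adjoint_comp_self_add_adjoint_comp_self_eq_one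
    {B : K →L[ℂ] F} {D : K →L[ℂ] K}
    (h : adjoint B ∘L B + adjoint D ∘L D = 1) : ‖D‖ ≤ 1 := by
  refine opNorm_le_bound D zero_le_one fun x => ?_
  have hsq : ‖B x‖ ^ 2 + ‖D x‖ ^ 2 = ‖x‖ ^ 2 := by
    rw [apply_norm_sq_eq_inner_adjoint_left, apply_norm_sq_eq_inner_adjoint_left, ← map_add,
      ← inner_add_left, ← add_apply, h, one_apply_eq_self, inner_self_eq_norm_sq]
  nlinarith [norm_nonneg (B x), norm_nonneg (D x), norm_nonneg x]

theorem adjoint_inverse_one_sub_comp (D Ez : K →L[ℂ] K) :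
    adjoint (Ring.inverse (1 - D ∘L Ez)) = Ring.inverse (1 - adjoint Ez ∘L adjoint D) := by
  rw [← star_eq_adjoint, ← Ring.inverse_star, star_sub, star_one, star_eq_adjoint (D ∘L Ez),
    adjoint_comp]

theorem adjoint_comp_self_add_adjoint_comp_self_eq_one_add {A : E →L[ℂ] E} {B : K →L[ℂ] E}
    {C : E →L[ℂ] K} {D : K →L[ℂ] K}
    (h1 : adjoint A ∘L A + adjoint C ∘L C = 1)
    (h2 : adjoint A ∘L B + adjoint C ∘L D = 0)
    (h3 : adjoint B ∘L B + adjoint D ∘L D = 1) (Y : E →L[ℂ] K) :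
    adjoint (A + B ∘L Y) ∘L (A + B ∘L Y) + adjoint (C + D ∘L Y) ∘L (C + D ∘L Y) =
      1 + adjoint Y ∘L Y := by
  have h2' : adjoint B ∘L A + adjoint D ∘L C = 0 := by
    simpa only [map_add, adjoint_comp, adjoint_adjoint, map_zero] using congrArg adjoint h2
  calc _ = (adjoint A ∘L A + adjoint C ∘L C) + (adjoint A ∘L B + adjoint C ∘L D) ∘L Y
        + adjoint Y ∘L (adjoint B ∘L A + adjoint D ∘L C)
        + adjoint Y ∘L (adjoint B ∘L B + adjoint D ∘L D) ∘L Y := by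
        simp only [map_add, adjoint_comp, add_comp, comp_add, comp_assoc]
        abel
    _ = _ := by rw [h1, h2, h2', h3]; simp [one_def]

end Colligation

theorem transfer_function_identity_general
    {E K : Type*} [NormedAddCommGroup E] [InnerProductSpace ℂ E] [CompleteSpace E]
    [NormedAddCommGroup K] [InnerProductSpace ℂ K] [CompleteSpace K]
    (A : E →L[ℂ] E) (B : K →L[ℂ] E) (C : E →L[ℂ] K) (D : K →L[ℂ] K)
    -- `U* U = I` :
    (h1 : adjoint A ∘L A + adjoint C ∘L C = 1)
    (h2 : adjoint A ∘L B + adjoint C ∘L D = 0)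
    (h3 : adjoint B ∘L B + adjoint D ∘L D = 1)
    (Ez : K →L[ℂ] K) (hEz : ‖Ez‖ < 1) :
    (1 : E →L[ℂ] E) -
        adjoint (A + B ∘L Ez ∘L Ring.inverse (1 - D ∘L Ez) ∘L C) ∘L
          (A + B ∘L Ez ∘L Ring.inverse (1 - D ∘L Ez) ∘L C) =
      adjoint C ∘L Ring.inverse (1 - adjoint Ez ∘L adjoint D) ∘L
        ((1 : K →L[ℂ] K) - adjoint Ez ∘L Ez) ∘L Ring.inverse (1 - D ∘L Ez) ∘L C := by
  have hDEz : ‖D ∘L Ez‖ < 1 := (opNorm_comp_le D Ez).trans_lt <| by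
    nlinarith [norm_le_one_of_adjoint_comp_self_add_adjoint_comp_self_eq_one h3, norm_nonneg Ez]
  rw [← adjoint_inverse_one_sub_comp]
  set N := Ring.inverse (1 - D ∘L Ez)
  have hN : N = 1 + (D ∘L Ez) * N := by
    simpa using NormedRing.inverse_one_sub_nth_order' 1 hDEz
  have gram := adjoint_comp_self_add_adjoint_comp_self_eq_one_add h1 h2 h3 (Ez ∘L N ∘L C)
  have hW : C + D ∘L Ez ∘L N ∘L C = N ∘L C := by
    conv_rhs => rw [hN]
    rw [add_comp, mul_def, one_def, id_comp, comp_assoc, comp_assoc]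
  rw [hW] at gram
  calc _ = adjoint (N ∘L C) ∘L (N ∘L C) - adjoint (Ez ∘L N ∘L C) ∘L (Ez ∘L N ∘L C) := by
        rw [sub_eq_sub_iff_add_eq_add, ← gram, add_comm]
    _ = _ := by simp only [adjoint_comp, comp_sub, sub_comp, comp_assoc, one_def, id_comp]

/-- Fundamental transfer-function identity.  `U = [[A, B], [C, D]]` is a unitary on
`E ⊕ K` (expressed through the block relations `U*U = I`, `UU* = I`), `Ez` is a strict
contraction on `K`, and `τ = A + B Ez (I − D Ez)⁻¹ C`.  Then
`I − τ*τ = C* (I − Ez* D*)⁻¹ (I − Ez* Ez) (I − D Ez)⁻¹ C`. -/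
theorem transfer_function_identity
    {E K : Type*} [NormedAddCommGroup E] [InnerProductSpace ℂ E] [CompleteSpace E]
    [NormedAddCommGroup K] [InnerProductSpace ℂ K] [CompleteSpace K]
    (A : E →L[ℂ] E) (B : K →L[ℂ] E) (C : E →L[ℂ] K) (D : K →L[ℂ] K)
    -- `U* U = I` :
    (h1 : adjoint A ∘L A + adjoint C ∘L C = 1)
    (h2 : adjoint A ∘L B + adjoint C ∘L D = 0)
    (h3 : adjoint B ∘L B + adjoint D ∘L D = 1)
    -- `U U* = I` :
    (h4 : A ∘L adjoint A + B ∘L adjoint B = 1)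
    (h5 : A ∘L adjoint C + B ∘L adjoint D = 0)
    (h6 : C ∘L adjoint C + D ∘L adjoint D = 1)
    (Ez : K →L[ℂ] K) (hEz : ‖Ez‖ < 1) :
    (1 : E →L[ℂ] E) -
        adjoint (A + B ∘L Ez ∘L Ring.inverse (1 - D ∘L Ez) ∘L C) ∘L
          (A + B ∘L Ez ∘L Ring.inverse (1 - D ∘L Ez) ∘L C) =
      adjoint C ∘L Ring.inverse (1 - adjoint Ez ∘L adjoint D) ∘L
        ((1 : K →L[ℂ] K) - adjoint Ez ∘L Ez) ∘L Ring.inverse (1 - D ∘L Ez) ∘L C :=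
  transfer_function_identity_general A B C D h1 h2 h3 Ez hEz
end

section
/- Let E ⊕ K be a direct sum of Hilbert spaces, U = [[A, B], [C, D]] a unitary on E ⊕ K, and E(z) a strict contraction on K. Define the transfer function τ(z) = A + B E(z)(I − D E(z))⁻¹ C. Then τ(z) is a contraction (‖τ(z)‖ ≤ 1). -/
open ContinuousLinearMap
open scoped ComplexInnerProductSpace
set_option maxHeartbeats 1000000

section aux

variable {E K : Type*} [NormedAddCommGroup E] [InnerProductSpace ℂ E] [CompleteSpace E]
    [NormedAddCommGroup K] [InnerProductSpace ℂ K] [CompleteSpace K]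

lemma transfer_key
    (A : E →L[ℂ] E) (B : K →L[ℂ] E) (C : E →L[ℂ] K) (D : K →L[ℂ] K)
    (h1 : adjoint A ∘L A + adjoint C ∘L C = 1)
    (h2 : adjoint A ∘L B + adjoint C ∘L D = 0)
    (h3 : adjoint B ∘L B + adjoint D ∘L D = 1)
    (x : E) (u : K) :
    ‖A x + B u‖ ^ 2 + ‖C x + D u‖ ^ 2 = ‖x‖ ^ 2 + ‖u‖ ^ 2 := by
  have h1' : ⟪A x, A x⟫ + ⟪C x, C x⟫ = ⟪x, x⟫ := by
    have := congrArg (fun T : E →L[ℂ] E => ⟪x, T x⟫) h1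
    simpa [inner_add_right, adjoint_inner_right] using this
  have h2' : ⟪A x, B u⟫ + ⟪C x, D u⟫ = 0 := by
    have := congrArg (fun T : K →L[ℂ] E => ⟪x, T u⟫) h2
    simpa [inner_add_right, adjoint_inner_right] using this
  have h3' : ⟪B u, B u⟫ + ⟪D u, D u⟫ = ⟪u, u⟫ := by
    have := congrArg (fun T : K →L[ℂ] K => ⟪u, T u⟫) h3
    simpa [inner_add_right, adjoint_inner_right] using this
  simp only [inner_self_eq_norm_sq_to_K] at h1' h3'
  have r1 : ‖A x‖ ^ 2 + ‖C x‖ ^ 2 = ‖x‖ ^ 2 := by exact_mod_cast h1'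
  have r3 : ‖B u‖ ^ 2 + ‖D u‖ ^ 2 = ‖u‖ ^ 2 := by exact_mod_cast h3'
  have r2 := congrArg Complex.re h2'
  simp only [Complex.add_re, Complex.zero_re] at r2
  have n1 := @norm_add_sq ℂ E _ _ _ (A x) (B u)
  have n2 := @norm_add_sq ℂ K _ _ _ (C x) (D u)
  simp only [RCLike.re_to_complex] at n1 n2
  linarith

end aux

/-- If `U = [[A, B], [C, D]]` is a unitary on `E ⊕ K` (expressed through the block
relations `U*U = I`, `UU* = I`) and `Ez` is a strict contraction on `K`, then the
transfer function `τ = A + B Ez (I − D Ez)⁻¹ C` is a contraction: `‖τ‖ ≤ 1`. -/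
theorem transfer_function_contractive
    {E K : Type*} [NormedAddCommGroup E] [InnerProductSpace ℂ E] [CompleteSpace E]
    [NormedAddCommGroup K] [InnerProductSpace ℂ K] [CompleteSpace K]
    (A : E →L[ℂ] E) (B : K →L[ℂ] E) (C : E →L[ℂ] K) (D : K →L[ℂ] K)
    (h1 : adjoint A ∘L A + adjoint C ∘L C = 1)
    (h2 : adjoint A ∘L B + adjoint C ∘L D = 0)
    (h3 : adjoint B ∘L B + adjoint D ∘L D = 1)
    (h4 : A ∘L adjoint A + B ∘L adjoint B = 1)
    (h5 : A ∘L adjoint C + B ∘L adjoint D = 0)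
    (h6 : C ∘L adjoint C + D ∘L adjoint D = 1)
    (Ez : K →L[ℂ] K) (hEz : ‖Ez‖ < 1) :
    ‖A + B ∘L Ez ∘L Ring.inverse (1 - D ∘L Ez) ∘L C‖ ≤ 1 := by
  -- D is a contraction
  have hD : ∀ u : K, ‖D u‖ ≤ ‖u‖ := by
    intro u
    have hk := transfer_key A B C D h1 h2 h3 0 u
    simp only [map_zero, zero_add, norm_zero] at hk
    nlinarith [norm_nonneg (D u), norm_nonneg u, sq_nonneg (‖B u‖)]
  have hEz0 : (0:ℝ) ≤ ‖Ez‖ := norm_nonneg _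
  have hDEz : ‖D ∘L Ez‖ < 1 := by
    have hle : ‖D ∘L Ez‖ ≤ ‖Ez‖ := by
      apply opNorm_le_bound _ hEz0
      intro v
      calc ‖(D ∘L Ez) v‖ ≤ ‖Ez v‖ := hD (Ez v)
        _ ≤ ‖Ez‖ * ‖v‖ := le_opNorm Ez v
    linarith
  have hunit : IsUnit (1 - D ∘L Ez) := by
    have := (Units.oneSub (D ∘L Ez) hDEz).isUnit
    rwa [Units.val_oneSub] at this
  have hinv : (1 - D ∘L Ez) * Ring.inverse (1 - D ∘L Ez) = 1 :=
    Ring.mul_inverse_cancel _ hunit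
  apply opNorm_le_bound _ zero_le_one
  intro x
  rw [one_mul]
  set y : K := Ring.inverse (1 - D ∘L Ez) (C x) with hy
  have h' : C x + D (Ez y) = y := by
    have h'' : (1 - D ∘L Ez) y = C x := by
      rw [hy, ← ContinuousLinearMap.mul_apply, hinv, ContinuousLinearMap.one_apply]
    have : y - D (Ez y) = C x := by
      simpa [ContinuousLinearMap.sub_apply, ContinuousLinearMap.comp_apply] using h''
    rw [← this]; abel
  have hk := transfer_key A B C D h1 h2 h3 x (Ez y)
  rw [h'] at hk
  have hτ : (A + B ∘L Ez ∘L Ring.inverse (1 - D ∘L Ez) ∘L C) x = A x + B (Ez y) := by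
    simp [ContinuousLinearMap.add_apply, ContinuousLinearMap.comp_apply, hy]
  rw [hτ]
  have hEzy : ‖Ez y‖ ≤ ‖y‖ := by
    calc ‖Ez y‖ ≤ ‖Ez‖ * ‖y‖ := le_opNorm Ez y
      _ ≤ 1 * ‖y‖ := by
        apply mul_le_mul_of_nonneg_right (le_of_lt hEz) (norm_nonneg y)
      _ = ‖y‖ := one_mul _
  nlinarith [norm_nonneg (A x + B (Ez y)), norm_nonneg x, norm_nonneg y, norm_nonneg (Ez y)]
end

section
/- Let E ⊕ K be a direct sum of Hilbert spaces, U = [[A, B], [C, D]] unitary on E ⊕ K, E(z) a strict contraction on K, and τ(z) = A + B E(z)(I − D E(z))⁻¹ C the associated transfer function. If A is completely non-unitary (A has no nonzero reducing subspace on which it acts as a unitary; equivalently, there is no nonzero v ∈ E with A v = λ v and A* v = conj(λ) v for some unimodular λ), then τ(z) has no unimodular eigenvalue: there is no nonzero v ∈ E and λ ∈ ℂ with |λ| = 1 such that τ(z) v = λ v. -/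
/-!
Put `w = (1 - D Ez)⁻¹ C v` and `x = Ez w`, so that `U (v, x) = (τ v, w)`. Since `U` is an
isometry, `‖τ v‖² + ‖w‖² = ‖v‖² + ‖x‖²`; if `τ v = λ v` with `|λ| = 1` this forces
`‖Ez w‖ = ‖w‖`, hence `w = 0` because `Ez` is a strict contraction. Then `C v = 0` and
`A v = λ v`, and `A* A + C* C = 1` gives `A* v = conj(λ) v`, so `v = 0` since `A` is
completely non-unitary.
-/

open ContinuousLinearMap

theorem eq_zero_of_norm_apply_eq_of_norm_lt_one {𝕜 F : Type*} [NontriviallyNormedField 𝕜]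
    [NormedAddCommGroup F] [NormedSpace 𝕜 F] {T : F →L[𝕜] F} (hT : ‖T‖ < 1) {w : F}
    (h : ‖T w‖ = ‖w‖) : w = 0 := by
  by_contra hw
  have hpos : 0 < ‖w‖ := norm_pos_iff.mpr hw
  have : ‖T w‖ < ‖w‖ :=
    calc ‖T w‖ ≤ ‖T‖ * ‖w‖ := T.le_opNorm w
      _ < 1 * ‖w‖ := by gcongr
      _ = ‖w‖ := one_mul _
  exact this.ne h

section

variable {𝕜 E K : Type*} [RCLike 𝕜]
  [NormedAddCommGroup E] [InnerProductSpace 𝕜 E] [CompleteSpace E]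
  [NormedAddCommGroup K] [InnerProductSpace 𝕜 K] [CompleteSpace K]

/-- `U = [[A, B], [C, D]]` is an isometry of `E × K`: the blocks of `U* U = 1`. -/
structure IsBlockIsometry (A : E →L[𝕜] E) (B : K →L[𝕜] E) (C : E →L[𝕜] K)
    (D : K →L[𝕜] K) : Prop where
  adjoint_fst_fst : adjoint A ∘L A + adjoint C ∘L C = 1
  adjoint_fst_snd : adjoint A ∘L B + adjoint C ∘L D = 0
  adjoint_snd_snd : adjoint B ∘L B + adjoint D ∘L D = 1

noncomputable def transferFunction (A : E →L[𝕜] E) (B : K →L[𝕜] E) (C : E →L[𝕜] K)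
    (D : K →L[𝕜] K) (Ez : K →L[𝕜] K) : E →L[𝕜] E :=
  A + B ∘L Ez ∘L Ring.inverse (1 - D ∘L Ez) ∘L C

namespace IsBlockIsometry

variable {A : E →L[𝕜] E} {B : K →L[𝕜] E} {C : E →L[𝕜] K} {D : K →L[𝕜] K}

theorem adjoint_apply_fst (hU : IsBlockIsometry A B C D) (v : E) (x : K) :
    adjoint A (A v + B x) + adjoint C (C v + D x) = v := by
  have h1 := congrArg (fun T => T v) hU.adjoint_fst_fst
  have h2 := congrArg (fun T => T x) hU.adjoint_fst_snd
  simp only [add_apply, comp_apply, one_apply_eq_self, zero_apply] at h1 h2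
  simp only [map_add]
  linear_combination (norm := abel) h1 + h2

theorem adjoint_apply_snd (hU : IsBlockIsometry A B C D) (v : E) (x : K) :
    adjoint B (A v + B x) + adjoint D (C v + D x) = x := by
  have h2 := congrArg (fun T => T v) (congrArg adjoint hU.adjoint_fst_snd)
  have h3 := congrArg (fun T => T x) hU.adjoint_snd_snd
  simp only [map_add, adjoint_comp, adjoint_adjoint, map_zero, add_apply, comp_apply,
    one_apply_eq_self, zero_apply] at h2 h3
  simp only [map_add]
  linear_combination (norm := abel) h2 + h3

theorem norm_sq_add_norm_sq (hU : IsBlockIsometry A B C D) (v : E) (x : K) :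
    ‖A v + B x‖ ^ 2 + ‖C v + D x‖ ^ 2 = ‖v‖ ^ 2 + ‖x‖ ^ 2 := by
  have h : (inner 𝕜 (A v + B x) (A v + B x) + inner 𝕜 (C v + D x) (C v + D x) : 𝕜)
      = inner 𝕜 v v + inner 𝕜 x x :=
    calc _ = inner 𝕜 v (adjoint A (A v + B x) + adjoint C (C v + D x))
          + inner 𝕜 x (adjoint B (A v + B x) + adjoint D (C v + D x)) := by
          simp only [inner_add_left, inner_add_right, adjoint_inner_right]; ring
      _ = _ := by rw [hU.adjoint_apply_fst, hU.adjoint_apply_snd]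
  simp only [inner_self_eq_norm_sq_to_K] at h
  exact_mod_cast h

theorem norm_snd_snd_le_one (hU : IsBlockIsometry A B C D) : ‖D‖ ≤ 1 := by
  refine opNorm_le_bound D zero_le_one fun x => ?_
  have h := hU.norm_sq_add_norm_sq 0 x
  simp only [map_zero, zero_add, norm_zero] at h
  rw [one_mul]
  nlinarith [norm_nonneg (B x), norm_nonneg (D x), norm_nonneg x]

theorem isUnit_one_sub_comp (hU : IsBlockIsometry A B C D) {Ez : K →L[𝕜] K}
    (hEz : ‖Ez‖ < 1) : IsUnit (1 - D ∘L Ez) := by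
  refine isUnit_one_sub_of_norm_lt_one ?_
  calc ‖D ∘L Ez‖ ≤ ‖D‖ * ‖Ez‖ := opNorm_comp_le D Ez
    _ ≤ 1 * ‖Ez‖ := by gcongr; exact hU.norm_snd_snd_le_one
    _ < 1 := by rwa [one_mul]

theorem apply_eq_smul_of_transferFunction_apply_eq_smul (hU : IsBlockIsometry A B C D)
    {Ez : K →L[𝕜] K} (hEz : ‖Ez‖ < 1) {v : E} {lam : 𝕜} (hlam : ‖lam‖ = 1)
    (heig : transferFunction A B C D Ez v = lam • v) : A v = lam • v ∧ C v = 0 := by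
  set w := Ring.inverse (1 - D ∘L Ez) (C v)
  have hw : C v + D (Ez w) = w := by
    have h := congrArg (fun T => T (C v))
      (Ring.mul_inverse_cancel _ (hU.isUnit_one_sub_comp hEz))
    simp only [mul_apply_eq_comp, sub_apply, one_apply_eq_self, comp_apply] at h
    rw [← h]; abel
  have hτ : A v + B (Ez w) = lam • v := heig
  have hnorm := hU.norm_sq_add_norm_sq v (Ez w)
  rw [hτ, hw, norm_smul, hlam, one_mul] at hnorm
  have hw0 : w = 0 := by
    refine eq_zero_of_norm_apply_eq_of_norm_lt_one hEz ?_
    nlinarith [norm_nonneg w, norm_nonneg (Ez w)]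
  rw [hw0, map_zero, map_zero, add_zero] at hτ hw
  exact ⟨hτ, hw⟩

theorem adjoint_apply_eq_conj_smul (hU : IsBlockIsometry A B C D) {v : E} {lam : 𝕜}
    (hlam : ‖lam‖ = 1) (hAv : A v = lam • v) (hCv : C v = 0) :
    adjoint A v = (starRingEnd 𝕜) lam • v := by
  have h := hU.adjoint_apply_fst v 0
  simp only [map_zero, add_zero, hCv, hAv, map_smul] at h
  have hconj : (starRingEnd 𝕜) lam * lam = 1 := by
    rw [RCLike.conj_mul, hlam]; simp
  calc adjoint A v = ((starRingEnd 𝕜) lam * lam) • adjoint A v := by rw [hconj, one_smul]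
    _ = (starRingEnd 𝕜) lam • v := by rw [mul_smul, h]

end IsBlockIsometry

end

theorem transfer_function_no_unimodular_eigenvalue_general
    {E K : Type*} [NormedAddCommGroup E] [InnerProductSpace ℂ E] [CompleteSpace E]
    [NormedAddCommGroup K] [InnerProductSpace ℂ K] [CompleteSpace K]
    (A : E →L[ℂ] E) (B : K →L[ℂ] E) (C : E →L[ℂ] K) (D : K →L[ℂ] K)
    (h1 : adjoint A ∘L A + adjoint C ∘L C = 1)
    (h2 : adjoint A ∘L B + adjoint C ∘L D = 0)
    (h3 : adjoint B ∘L B + adjoint D ∘L D = 1)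
    (Ez : K →L[ℂ] K) (hEz : ‖Ez‖ < 1)
    (hcnu : ∀ (v : E) (lam : ℂ), ‖lam‖ = 1 → A v = lam • v →
      adjoint A v = (starRingEnd ℂ) lam • v → v = 0) :
    ¬ ∃ (v : E) (lam : ℂ), v ≠ 0 ∧ ‖lam‖ = 1 ∧
        (A + B ∘L Ez ∘L Ring.inverse (1 - D ∘L Ez) ∘L C) v = lam • v := by
  rintro ⟨v, lam, hv, hlam, heig⟩
  have hU : IsBlockIsometry A B C D := ⟨h1, h2, h3⟩
  obtain ⟨hAv, hCv⟩ := hU.apply_eq_smul_of_transferFunction_apply_eq_smul hEz hlam heig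
  exact hv (hcnu v lam hlam hAv (hU.adjoint_apply_eq_conj_smul hlam hAv hCv))

/-- If `U = [[A, B], [C, D]]` is a unitary on `E ⊕ K`, `Ez` is a strict contraction on
`K`, and the block `A` is completely non-unitary (no nonzero joint unimodular
eigenvector of `A` and `A*`), then the transfer function
`τ = A + B Ez (I − D Ez)⁻¹ C` has no unimodular eigenvalue. -/
theorem transfer_function_no_unimodular_eigenvalue
    {E K : Type*} [NormedAddCommGroup E] [InnerProductSpace ℂ E] [CompleteSpace E]
    [NormedAddCommGroup K] [InnerProductSpace ℂ K] [CompleteSpace K]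
    (A : E →L[ℂ] E) (B : K →L[ℂ] E) (C : E →L[ℂ] K) (D : K →L[ℂ] K)
    (h1 : adjoint A ∘L A + adjoint C ∘L C = 1)
    (h2 : adjoint A ∘L B + adjoint C ∘L D = 0)
    (h3 : adjoint B ∘L B + adjoint D ∘L D = 1)
    (h4 : A ∘L adjoint A + B ∘L adjoint B = 1)
    (h5 : A ∘L adjoint C + B ∘L adjoint D = 0)
    (h6 : C ∘L adjoint C + D ∘L adjoint D = 1)
    (Ez : K →L[ℂ] K) (hEz : ‖Ez‖ < 1)
    (hcnu : ∀ (v : E) (lam : ℂ), ‖lam‖ = 1 → A v = lam • v →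
      adjoint A v = (starRingEnd ℂ) lam • v → v = 0) :
    ¬ ∃ (v : E) (lam : ℂ), v ≠ 0 ∧ ‖lam‖ = 1 ∧
        (A + B ∘L Ez ∘L Ring.inverse (1 - D ∘L Ez) ∘L C) v = lam • v :=
  transfer_function_no_unimodular_eigenvalue_general A B C D h1 h2 h3 Ez hEz hcnu
end

section
/- Let (T₁, T₂) be a pair of commuting contractions on H satisfying the Szegő positivity condition I − T₁T₁* − T₂T₂* + T₁T₂T₂*T₁* ≥ 0, and let j, k ≥ 1. Set T₃ = T₁ʲT₂ᵏ, G₁ = I − T₁ʲT₁*ʲ, and G₂ = T₁ʲ(I − T₂ᵏT₂*ᵏ)T₁*ʲ. Then (i) G₁ ≥ 0 and G₂ ≥ 0; (ii) I − T₃T₃* = G₁ + G₂; (iii) G₁ − T₂G₁T₂* ≥ 0; (iv) G₂ − T₁G₂T₁* ≥ 0. -/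
/-!
Write `Δ_S X = X - S X S*`. When `S` commutes with `A`, `Δ_S` passes through the conjugation
`X ↦ A X A*`, so the telescoping identity
`1 - Tⁿ⁺¹ T*ⁿ⁺¹ = (1 - Tⁿ T*ⁿ) + Tⁿ (1 - T T*) T*ⁿ` propagates positivity of `1 - T T*` and of
`Δ_S (1 - T T*)` to all powers of `T`. Szegő positivity says `Δ_{T₁} (1 - T₂ T₂*) ≥ 0`, and for
commuting `T₁, T₂` this operator equals `Δ_{T₂} (1 - T₁ T₁*)`. Only the step from `‖T‖ ≤ 1` to
`T T* ≤ 1` uses more than the structure of a star-ordered ring.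
-/

open ContinuousLinearMap

section StarRing

variable {R : Type*} [Ring R] [StarRing R]

theorem Commute.sub_conj_conj {S A : R} (h : Commute S A) (X : R) :
    A * X * star A - S * (A * X * star A) * star S = A * (X - S * X * star S) * star A := by
  have hstar : star A * star S = star S * star A := by
    rw [← star_mul, ← star_mul, h.eq]
  calc A * X * star A - S * (A * X * star A) * star S
      = A * X * star A - (S * A) * X * (star A * star S) := by noncomm_ring
    _ = A * X * star A - (A * S) * X * (star S * star A) := by rw [h.eq, hstar]
    _ = A * (X - S * X * star S) * star A := by noncomm_ring

theorem one_sub_pow_succ_mul_star_pow_succ (T : R) (n : ℕ) :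
    1 - T ^ (n + 1) * star (T ^ (n + 1))
      = (1 - T ^ n * star (T ^ n)) + T ^ n * (1 - T * star T) * star (T ^ n) := by
  rw [pow_succ, star_mul]
  noncomm_ring

theorem sub_conj_one_sub_mul_star (S T : R) :
    (1 - T * star T) - S * (1 - T * star T) * star S
      = 1 - S * star S - T * star T + S * T * star T * star S := by
  noncomm_ring

theorem Commute.sub_conj_one_sub_mul_star_comm {S T : R} (h : Commute S T) :
    (1 - T * star T) - S * (1 - T * star T) * star S
      = (1 - S * star S) - T * (1 - S * star S) * star T := by
  have hST : S * T * star T * star S = T * S * star S * star T := by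
    rw [mul_assoc, ← star_mul, mul_assoc (T * S), ← star_mul, h.eq]
  rw [sub_conj_one_sub_mul_star, sub_conj_one_sub_mul_star, sub_right_comm, hST]

end StarRing

section StarOrderedRing

variable {R : Type*} [Ring R] [StarRing R] [PartialOrder R] [StarOrderedRing R] {S T : R}

theorem one_sub_pow_mul_star_pow_nonneg (hT : 0 ≤ 1 - T * star T) (n : ℕ) :
    0 ≤ 1 - T ^ n * star (T ^ n) := by
  induction n with
  | zero => simp
  | succ n ih =>
    rw [one_sub_pow_succ_mul_star_pow_succ]
    exact add_nonneg ih (star_right_conjugate_nonneg hT _)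

theorem sub_conj_one_sub_pow_mul_star_pow_nonneg (h : Commute S T)
    (hD : 0 ≤ (1 - T * star T) - S * (1 - T * star T) * star S) (n : ℕ) :
    0 ≤ (1 - T ^ n * star (T ^ n)) - S * (1 - T ^ n * star (T ^ n)) * star S := by
  induction n with
  | zero => simp
  | succ n ih =>
    rw [one_sub_pow_succ_mul_star_pow_succ, mul_add, add_mul, add_sub_add_comm,
      (h.pow_right n).sub_conj_conj]
    exact add_nonneg ih (star_right_conjugate_nonneg hD _)

end StarOrderedRing

theorem CStarAlgebra.one_sub_mul_star_nonneg {A : Type*} [CStarAlgebra A] [PartialOrder A]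
    [StarOrderedRing A] {a : A} (ha : ‖a‖ ≤ 1) : 0 ≤ 1 - a * star a := by
  refine sub_nonneg.mpr <| (norm_le_one_iff_of_nonneg _ (mul_star_self_nonneg a)).mp ?_
  rw [CStarRing.norm_self_mul_star]
  exact mul_le_one₀ ha (norm_nonneg a) ha

theorem szego_pair_product_in_P3_general
    {H : Type*} [NormedAddCommGroup H] [InnerProductSpace ℂ H] [CompleteSpace H]
    (T₁ T₂ : H →L[ℂ] H) (hcomm : T₁ * T₂ = T₂ * T₁)
    (hT₁ : ‖T₁‖ ≤ 1) (hT₂ : ‖T₂‖ ≤ 1)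
    (hszego : ((1 : H →L[ℂ] H) - T₁ * adjoint T₁ - T₂ * adjoint T₂
        + T₁ * T₂ * adjoint T₂ * adjoint T₁).IsPositive)
    (j k : ℕ) :
    (((1 : H →L[ℂ] H) - T₁ ^ j * adjoint (T₁ ^ j)).IsPositive ∧
      (T₁ ^ j * ((1 : H →L[ℂ] H) - T₂ ^ k * adjoint (T₂ ^ k)) * adjoint (T₁ ^ j)).IsPositive) ∧
    ((1 : H →L[ℂ] H) - (T₁ ^ j * T₂ ^ k) * adjoint (T₁ ^ j * T₂ ^ k)
        = ((1 : H →L[ℂ] H) - T₁ ^ j * adjoint (T₁ ^ j))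
          + T₁ ^ j * ((1 : H →L[ℂ] H) - T₂ ^ k * adjoint (T₂ ^ k)) * adjoint (T₁ ^ j)) ∧
    (((1 : H →L[ℂ] H) - T₁ ^ j * adjoint (T₁ ^ j))
        - T₂ * ((1 : H →L[ℂ] H) - T₁ ^ j * adjoint (T₁ ^ j)) * adjoint T₂).IsPositive ∧
    ((T₁ ^ j * ((1 : H →L[ℂ] H) - T₂ ^ k * adjoint (T₂ ^ k)) * adjoint (T₁ ^ j))
        - T₁ * (T₁ ^ j * ((1 : H →L[ℂ] H) - T₂ ^ k * adjoint (T₂ ^ k)) * adjoint (T₁ ^ j))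
          * adjoint T₁).IsPositive := by
  simp only [← nonneg_iff_isPositive, ← star_eq_adjoint] at hszego ⊢
  rw [← sub_conj_one_sub_mul_star] at hszego
  have hcomm' : Commute T₁ T₂ := hcomm
  have hszego' := hcomm'.sub_conj_one_sub_mul_star_comm ▸ hszego
  have hG₂ := star_right_conjugate_nonneg
    (one_sub_pow_mul_star_pow_nonneg (CStarAlgebra.one_sub_mul_star_nonneg hT₂) k) (T₁ ^ j)
  refine ⟨⟨one_sub_pow_mul_star_pow_nonneg (CStarAlgebra.one_sub_mul_star_nonneg hT₁) j, hG₂⟩,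
    ?_, sub_conj_one_sub_pow_mul_star_pow_nonneg hcomm'.symm hszego' j, ?_⟩
  · rw [star_mul]
    noncomm_ring
  · rw [((Commute.refl T₁).pow_right j).sub_conj_conj]
    exact star_right_conjugate_nonneg
      (sub_conj_one_sub_pow_mul_star_pow_nonneg hcomm' hszego k) _

/-- Let `(T₁, T₂)` be a commuting pair of contractions satisfying Szegő positivity,
`j, k ≥ 1`, `T₃ = T₁ʲT₂ᵏ`, `G₁ = I − T₁ʲT₁*ʲ` and `G₂ = T₁ʲ(I − T₂ᵏT₂*ᵏ)T₁*ʲ`.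
Then `G₁, G₂ ≥ 0`, `I − T₃T₃* = G₁ + G₂`, `G₁ − T₂G₁T₂* ≥ 0` and `G₂ − T₁G₂T₁* ≥ 0`.
(So `(T₁, T₂, T₁ʲT₂ᵏ)` belongs to the class `P₃(H)`.) -/
theorem szego_pair_product_in_P3
    {H : Type*} [NormedAddCommGroup H] [InnerProductSpace ℂ H] [CompleteSpace H]
    (T₁ T₂ : H →L[ℂ] H) (hcomm : T₁ * T₂ = T₂ * T₁)
    (hT₁ : ‖T₁‖ ≤ 1) (hT₂ : ‖T₂‖ ≤ 1)
    (hszego : ((1 : H →L[ℂ] H) - T₁ * adjoint T₁ - T₂ * adjoint T₂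
        + T₁ * T₂ * adjoint T₂ * adjoint T₁).IsPositive)
    (j k : ℕ) (hj : 1 ≤ j) (hk : 1 ≤ k) :
    (((1 : H →L[ℂ] H) - T₁ ^ j * adjoint (T₁ ^ j)).IsPositive ∧
      (T₁ ^ j * ((1 : H →L[ℂ] H) - T₂ ^ k * adjoint (T₂ ^ k)) * adjoint (T₁ ^ j)).IsPositive) ∧
    ((1 : H →L[ℂ] H) - (T₁ ^ j * T₂ ^ k) * adjoint (T₁ ^ j * T₂ ^ k)
        = ((1 : H →L[ℂ] H) - T₁ ^ j * adjoint (T₁ ^ j))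
          + T₁ ^ j * ((1 : H →L[ℂ] H) - T₂ ^ k * adjoint (T₂ ^ k)) * adjoint (T₁ ^ j)) ∧
    (((1 : H →L[ℂ] H) - T₁ ^ j * adjoint (T₁ ^ j))
        - T₂ * ((1 : H →L[ℂ] H) - T₁ ^ j * adjoint (T₁ ^ j)) * adjoint T₂).IsPositive ∧
    ((T₁ ^ j * ((1 : H →L[ℂ] H) - T₂ ^ k * adjoint (T₂ ^ k)) * adjoint (T₁ ^ j))
        - T₁ * (T₁ ^ j * ((1 : H →L[ℂ] H) - T₂ ^ k * adjoint (T₂ ^ k)) * adjoint (T₁ ^ j))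
          * adjoint T₁).IsPositive :=
  szego_pair_product_in_P3_general T₁ T₂ hcomm hT₁ hT₂ hszego j k
end

section
/- Let S be a contraction on a Hilbert space K and for 0 < t < 1 set X_t = (1−t)(I − tS)⁻¹. Then X_t is a contraction, i.e. ‖X_t‖ ≤ 1; equivalently I − X_t X_t* ≥ 0. -/
/-! The Neumann series gives `‖(1 - tS)⁻¹‖ ≤ (1 - t‖S‖)⁻¹ ≤ (1 - t)⁻¹`, and the factor `1 - t`
cancels this bound. -/

open ContinuousLinearMap

section NormedRing

variable {R : Type*} [NormedRing R] [HasSummableGeomSeries R]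

theorem norm_inverse_one_sub_le (h1 : ‖(1 : R)‖ ≤ 1) {x : R} (hx : ‖x‖ < 1) :
    ‖Ring.inverse (1 - x)‖ ≤ (1 - ‖x‖)⁻¹ := by
  rw [← geom_series_eq_inverse x hx]
  linarith [tsum_geometric_le_of_norm_lt_one x hx]

theorem norm_smul_inverse_one_sub_smul_le_one [NormedSpace ℝ R] (h1 : ‖(1 : R)‖ ≤ 1) {a : R}
    (ha : ‖a‖ ≤ 1) {t : ℝ} (ht0 : 0 ≤ t) (ht1 : t < 1) :
    ‖(1 - t) • Ring.inverse (1 - t • a)‖ ≤ 1 := by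
  have hta : ‖t • a‖ ≤ t := by
    simpa [norm_smul, abs_of_nonneg ht0] using mul_le_mul_of_nonneg_left ha ht0
  have hpos : 0 < 1 - ‖t • a‖ := by linarith
  calc ‖(1 - t) • Ring.inverse (1 - t • a)‖
      = (1 - t) * ‖Ring.inverse (1 - t • a)‖ := by
        rw [norm_smul, Real.norm_of_nonneg (by linarith)]
    _ ≤ (1 - t) * (1 - ‖t • a‖)⁻¹ :=
        mul_le_mul_of_nonneg_left (norm_inverse_one_sub_le h1 (by linarith)) (by linarith)
    _ ≤ 1 := by
        rw [← div_eq_mul_inv, div_le_one hpos]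
        linarith

end NormedRing

/-- If `S` is a contraction on a Hilbert space `K` and `0 < t < 1`, then
`X_t = (1 − t)(I − t S)⁻¹` is a contraction: `‖X_t‖ ≤ 1`. -/
theorem contraction_resolvent_contraction
    {K : Type*} [NormedAddCommGroup K] [InnerProductSpace ℂ K] [CompleteSpace K]
    (S : K →L[ℂ] K) (hS : ‖S‖ ≤ 1) (t : ℝ) (ht0 : 0 < t) (ht1 : t < 1) :
    ‖((1 - t : ℝ) • Ring.inverse ((1 : K →L[ℂ] K) - (t : ℝ) • S) : K →L[ℂ] K)‖ ≤ 1 :=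
  norm_smul_inverse_one_sub_smul_le_one norm_id_le hS ht0.le ht1
end

section
/- Let H be a Hilbert space, T = (T₁,…,Tₙ) commuting contractions on H with Tₙ pure (‖Tₙ*ᵐ f‖ → 0 for all f), and suppose Π : H → H²_{E₀⊕E₁}(𝔻^{n−1}) is an isometry with M_Φ* Π = Π Tₙ* where Φ = Φ₀ ⊕ Φ₁ is a block-diagonal multiplier with Φ₀(z) ≡ W* a constant unitary on E₀. Then ran Π ⊆ H²_{E₁}(𝔻^{n−1}). -/
/-! Every `g ∈ K₀` is `Mᵐ gₘ` with `gₘ ∈ K₀` and `‖gₘ‖ = ‖g‖`, so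
`⟪g, Π h⟫ = ⟪gₘ, (M*)ᵐ Π h⟫ = ⟪gₘ, Π (Tₙ*ᵐ h)⟫`, which tends to `0` by purity of `Tₙ`. -/

open ContinuousLinearMap Filter Function Set Topology

lemma norm_iterate_eq_of_mapsTo {E : Type*} [Norm E] {f : E → E} {s : Set E}
    (hmaps : MapsTo f s s) (hnorm : ∀ x ∈ s, ‖f x‖ = ‖x‖) (n : ℕ) {x : E} (hx : x ∈ s) :
    ‖f^[n] x‖ = ‖x‖ := by
  induction n generalizing x with
  | zero => rfl
  | succ n ih => rw [iterate_succ_apply, ih (hmaps hx), hnorm x hx]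

lemma exists_iterate_preimage_norm_eq {E : Type*} [Norm E] {f : E → E} {s : Set E}
    (hmaps : MapsTo f s s) (hsurj : SurjOn f s s) (hnorm : ∀ x ∈ s, ‖f x‖ = ‖x‖)
    (n : ℕ) {x : E} (hx : x ∈ s) : ∃ y ∈ s, f^[n] y = x ∧ ‖y‖ = ‖x‖ := by
  obtain ⟨y, hy, rfl⟩ := hsurj.iterate n hx
  exact ⟨y, hy, rfl, (norm_iterate_eq_of_mapsTo hmaps hnorm n hy).symm⟩

lemma inner_eq_zero_of_adjoint_comp_eq_comp {H K : Type*}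
    [NormedAddCommGroup H] [InnerProductSpace ℂ H] [CompleteSpace H]
    [NormedAddCommGroup K] [InnerProductSpace ℂ K] [CompleteSpace K]
    {S : H →L[ℂ] H} {D : H →L[ℂ] K} {A : K →L[ℂ] K} (hD : adjoint A ∘L D = D ∘L S)
    {h : H} (hh : Tendsto (fun m : ℕ => ‖(S ^ m) h‖) atTop (𝓝 0))
    {g : K} (hg : ∀ m : ℕ, ∃ g' : K, A^[m] g' = g ∧ ‖g'‖ = ‖g‖) :
    inner ℂ g (D h) = 0 := by
  have hsemiconj : Semiconj D S (adjoint A) := fun x => (congrArg (· x) hD).symm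
  have hbound : ∀ m : ℕ, ‖inner ℂ g (D h)‖ ≤ ‖g‖ * ‖D ((S ^ m) h)‖ := fun m => by
    obtain ⟨g', hg', hnorm⟩ := hg m
    have hiter : adjoint (A ^ m) (D h) = D ((S ^ m) h) := by
      rw [← star_eq_adjoint, star_pow, star_eq_adjoint, FunLike.coe_pow_eq_iterate,
        FunLike.coe_pow_eq_iterate, (hsemiconj.iterate_right m).eq]
    have hshift : inner ℂ g (D h) = inner ℂ g' (D ((S ^ m) h)) := by
      rw [← hg', ← FunLike.coe_pow_eq_iterate, ← adjoint_inner_right, hiter]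
    rw [hshift, ← hnorm]
    exact norm_inner_le_norm _ _
  have hD0 : Tendsto (fun m : ℕ => ‖g‖ * ‖D ((S ^ m) h)‖) atTop (𝓝 0) := by
    have := ((D.continuous.tendsto 0).comp (tendsto_zero_iff_norm_tendsto_zero.2 hh)).norm
    simpa using this.const_mul ‖g‖
  exact norm_le_zero_iff.1 (ge_of_tendsto' hD0 hbound)

theorem range_dilation_in_cnu_part_general
    {H K : Type*} [NormedAddCommGroup H] [InnerProductSpace ℂ H] [CompleteSpace H]
    [NormedAddCommGroup K] [InnerProductSpace ℂ K] [CompleteSpace K]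
    (Tn : H →L[ℂ] H)
    (hpure : ∀ f : H,
      Filter.Tendsto (fun m : ℕ => ‖((ContinuousLinearMap.adjoint Tn) ^ m) f‖)
        Filter.atTop (nhds 0))
    (Dil : H →L[ℂ] K)
    (M : K →L[ℂ] K)
    (K₀ : Submodule ℂ K)
    (hM₀ : ∀ g ∈ K₀, M g ∈ K₀ ∧ ‖M g‖ = ‖g‖)
    (hM₀' : ∀ g ∈ K₀, ∃ g' ∈ K₀, M g' = g)
    (hint : ContinuousLinearMap.adjoint M ∘L Dil
      = Dil ∘L ContinuousLinearMap.adjoint Tn) :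
    ∀ h : H, Dil h ∈ K₀ᗮ := by
  intro h
  rw [Submodule.mem_orthogonal]
  intro g hg
  refine inner_eq_zero_of_adjoint_comp_eq_comp hint (hpure h) fun m => ?_
  obtain ⟨g', -, hg'⟩ := exists_iterate_preimage_norm_eq (fun x hx => (hM₀ x hx).1) hM₀'
    (fun x hx => (hM₀ x hx).2) m hg
  exact ⟨g', hg'⟩

/-- Abstract form of Lemma on purity: `K` plays the role of the Hardy space
`H²_{E₀⊕E₁}(𝔻^{n-1})`, `K₀` the summand `H²_{E₀}(𝔻^{n-1})` and `K₀ᗮ` the summand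
`H²_{E₁}(𝔻^{n-1})`; `M` plays the role of the multiplication operator `M_Φ` of a
block-diagonal multiplier `Φ = Φ₀ ⊕ Φ₁` whose block `Φ₀ ≡ W*` is a constant unitary,
so that `M` preserves the two summands and restricts to a unitary of `K₀`.  If
`Π : H → K` is an isometry with `M_Φ* Π = Π Tₙ*` and `Tₙ` is a pure contraction,
then `ran Π ⊆ H²_{E₁}(𝔻^{n-1}) = K₀ᗮ`. -/
theorem range_dilation_in_cnu_part
    {H K : Type*} [NormedAddCommGroup H] [InnerProductSpace ℂ H] [CompleteSpace H]
    [NormedAddCommGroup K] [InnerProductSpace ℂ K] [CompleteSpace K]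
    (Tn : H →L[ℂ] H) (hTn : ‖Tn‖ ≤ 1)
    (hpure : ∀ f : H,
      Filter.Tendsto (fun m : ℕ => ‖((ContinuousLinearMap.adjoint Tn) ^ m) f‖)
        Filter.atTop (nhds 0))
    (Dil : H →L[ℂ] K) (hiso : ∀ h : H, ‖Dil h‖ = ‖h‖)
    (M : K →L[ℂ] K) (hM : ‖M‖ ≤ 1)
    (K₀ : Submodule ℂ K)
    (hM₀ : ∀ g ∈ K₀, M g ∈ K₀ ∧ ‖M g‖ = ‖g‖)
    (hM₀' : ∀ g ∈ K₀, ∃ g' ∈ K₀, M g' = g)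
    (hM₁ : ∀ g ∈ K₀ᗮ, M g ∈ K₀ᗮ)
    (hint : ContinuousLinearMap.adjoint M ∘L Dil
      = Dil ∘L ContinuousLinearMap.adjoint Tn) :
    ∀ h : H, Dil h ∈ K₀ᗮ :=
  range_dilation_in_cnu_part_general Tn hpure Dil M K₀ hM₀ hM₀' hint
end
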